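/- Assume t_N ≤ T. Then for every 2 ≤ n ≤ N and every choice of nonnegative real numbers a_1, …, a_n: ∑_{i=1}^{n} P^{n,i} a_i ≤ T^α Γ(2−α) ( a_1 + (1/(1−α)) · max_{2≤i≤n} ((t_i − t_1)/Δt_i)^α a_i ). -/

import Mathlib

open Real Finset

noncomputable def kk (β t : ℝ) : ℝ := t ^ (β - 1) / Real.Gamma β

noncomputable def Kd (α : ℝ) (t : ℕ → ℝ) (n j : ℕ) : ℝ :=
  (kk (2 - α) (t n - t (j - 1)) - kk (2 - α) (t n - t j)) / (t j - t (j - 1))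

noncomputable def Paux (α : ℝ) (t : ℕ → ℝ) (n : ℕ) : ℕ → ℝ
  | 0 => 1 / Kd α t n n
  | (m + 1) =>
      (1 / Kd α t (n - (m + 1)) (n - (m + 1))) *
        ∑ r ∈ (Finset.range (m + 1)).attach,
          Paux α t n r.1 *
            (Kd α t (n - r.1) (n - m) - Kd α t (n - r.1) (n - (m + 1)))
  decreasing_by exact Finset.mem_range.mp r.2

noncomputable def Pd (α : ℝ) (t : ℕ → ℝ) (n i : ℕ) : ℝ := Paux α t n (n - i)

noncomputable def Dd {H : Type*} [AddCommGroup H] [Module ℝ H]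
    (α : ℝ) (t : ℕ → ℝ) (φ : ℕ → H) (n : ℕ) : H :=
  ∑ j ∈ Finset.Icc 1 n, Kd α t n j • (φ j - φ (j - 1))

noncomputable def mlE (α z : ℝ) : ℝ := ∑' k : ℕ, z ^ k / Real.Gamma (α * k + 1)

open MeasureTheory

lemma cheb_integral {a b : ℝ} (hab : a < b) {f g : ℝ → ℝ}
    (hf : IntegrableOn f (Set.Ioo a b)) (hg : IntegrableOn g (Set.Ioo a b))
    (hfg : IntegrableOn (fun s => f s * g s) (Set.Ioo a b))
    (hm : ∀ s ∈ Set.Ioo a b, ∀ u ∈ Set.Ioo a b, s ≤ u → f u ≤ f s ∧ g s ≤ g u) :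
    (b - a) * ∫ s in Set.Ioo a b, f s * g s ≤
      (∫ s in Set.Ioo a b, f s) * ∫ s in Set.Ioo a b, g s := by
  set If := ∫ s in Set.Ioo a b, f s with hIf
  set Ig := ∫ s in Set.Ioo a b, g s with hIg
  set Ifg := ∫ s in Set.Ioo a b, f s * g s with hIfg
  have hvol : (volume (Set.Ioo a b)).toReal = b - a := by
    rw [Real.volume_Ioo, ENNReal.toReal_ofReal (by linarith)]
  have key : ∀ s ∈ Set.Ioo a b,
      (b - a) * (f s * g s) - f s * Ig - g s * If + Ifg ≤ 0 := by
    intro s hs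
    have h2 : (∫ u in Set.Ioo a b, (f s - f u) * (g s - g u))
        = (b - a) * (f s * g s) - f s * Ig - g s * If + Ifg := by
      have e : ∀ u, (f s - f u) * (g s - g u)
          = (f s * g s - f s * g u) - (g s * f u - f u * g u) := by intro u; ring
      simp_rw [e]
      have i1 : IntegrableOn (fun u => f s * g s - f s * g u) (Set.Ioo a b) :=
        (integrable_const _).sub (hg.const_mul _)
      have i2 : IntegrableOn (fun u => g s * f u - f u * g u) (Set.Ioo a b) :=
        (hf.const_mul _).sub hfg
      rw [integral_sub i1 i2, integral_sub (integrable_const _) (hg.const_mul _),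
          integral_sub (hf.const_mul _) hfg,
          setIntegral_const, integral_const_mul, integral_const_mul]
      rw [measureReal_def, hvol]
      simp only [smul_eq_mul, ← hIf, ← hIg, ← hIfg]
      ring
    rw [← h2]
    refine setIntegral_nonpos measurableSet_Ioo fun u hu => ?_
    rcases le_total s u with h | h
    · obtain ⟨h1, h2'⟩ := hm s hs u hu h
      exact mul_nonpos_iff.2 (Or.inl ⟨by linarith, by linarith⟩)
    · obtain ⟨h1, h2'⟩ := hm u hu s hs h
      exact mul_nonpos_iff.2 (Or.inr ⟨by linarith, by linarith⟩)
  have hI : (∫ s in Set.Ioo a b,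
      ((b - a) * (f s * g s) - f s * Ig - g s * If + Ifg)) ≤ 0 :=
    setIntegral_nonpos measurableSet_Ioo key
  have hIeq : (∫ s in Set.Ioo a b,
      ((b - a) * (f s * g s) - f s * Ig - g s * If + Ifg))
      = (b - a) * Ifg - If * Ig - Ig * If + (b - a) * Ifg := by
    have j1 : IntegrableOn (fun s => (b - a) * (f s * g s) - f s * Ig - g s * If)
        (Set.Ioo a b) := ((hfg.const_mul _).sub (hf.mul_const _)).sub (hg.mul_const _)
    have j2 : IntegrableOn (fun s => (b - a) * (f s * g s) - f s * Ig) (Set.Ioo a b) :=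
      (hfg.const_mul _).sub (hf.mul_const _)
    rw [integral_add j1 (integrable_const _),
        integral_sub j2 (hg.mul_const _),
        integral_sub (hfg.const_mul _) (hf.mul_const _),
        integral_const_mul ((b:ℝ)-a), integral_mul_const, integral_mul_const, setIntegral_const, measureReal_def, hvol]
    simp only [smul_eq_mul, ← hIf, ← hIg, ← hIfg]
  rw [hIeq, mul_comm Ig If] at hI
  linarith

lemma real_beta {p q : ℝ} (hp : 0 < p) (hq : 0 < q) :
    ∫ s in (0:ℝ)..1, s ^ (p - 1) * (1 - s) ^ (q - 1)
      = Real.Gamma p * Real.Gamma q / Real.Gamma (p + q) := by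
  have h := Complex.Gamma_mul_Gamma_eq_betaIntegral (s := (p:ℂ)) (t := (q:ℂ))
      (by simpa using hp) (by simpa using hq)
  have hB : Complex.betaIntegral p q
      = ((∫ s in (0:ℝ)..1, s ^ (p - 1) * (1 - s) ^ (q - 1) : ℝ) : ℂ) := by
    rw [← intervalIntegral.integral_ofReal]
    unfold Complex.betaIntegral
    refine intervalIntegral.integral_congr fun x hx => ?_
    rw [Set.uIcc_of_le (by norm_num : (0:ℝ) ≤ 1)] at hx
    rw [show ((p:ℂ) - 1) = ((p - 1 : ℝ) : ℂ) by push_cast; ring,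
        show ((q:ℂ) - 1) = ((q - 1 : ℝ) : ℂ) by push_cast; ring,
        show (1 - (x:ℂ)) = ((1 - x : ℝ) : ℂ) by push_cast; ring,
        ← Complex.ofReal_cpow hx.1, ← Complex.ofReal_cpow (by linarith [hx.2] : (0:ℝ) ≤ 1 - x),
        ← Complex.ofReal_mul]
  rw [hB, Complex.Gamma_ofReal, Complex.Gamma_ofReal,
      show ((p:ℂ) + (q:ℂ)) = ((p + q : ℝ) : ℂ) by push_cast; ring, Complex.Gamma_ofReal,
      ← Complex.ofReal_mul, ← Complex.ofReal_mul] at h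
  have h' := Complex.ofReal_inj.mp h
  have hΓ : Real.Gamma (p + q) ≠ 0 := (Real.Gamma_pos_of_pos (by linarith)).ne'
  rw [eq_div_iff hΓ, h']
  ring

lemma beta_shift {α x : ℝ} (h0 : 0 < α) (h1 : α < 1) (hx : 0 < x) :
    ∫ s in (0:ℝ)..x, s ^ (α - 1) * (x - s) ^ (-α)
      = Real.Gamma α * Real.Gamma (1 - α) := by
  have hcomp := intervalIntegral.integral_comp_mul_left
      (f := fun s => s ^ (α - 1) * (x - s) ^ (-α)) (a := (0:ℝ)) (b := 1) (c := x) hx.ne'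
  simp only [mul_zero, mul_one, smul_eq_mul] at hcomp
  have heq : (∫ u in (0:ℝ)..1, (x * u) ^ (α - 1) * (x - x * u) ^ (-α))
      = x⁻¹ * ∫ u in (0:ℝ)..1, u ^ (α - 1) * (1 - u) ^ (-α) := by
    rw [← intervalIntegral.integral_const_mul]
    refine intervalIntegral.integral_congr fun u hu => ?_
    rw [Set.uIcc_of_le (by norm_num : (0:ℝ) ≤ 1)] at hu
    have h1u : 0 ≤ 1 - u := by linarith [hu.2]
    rw [show x - x * u = x * (1 - u) by ring, Real.mul_rpow hx.le hu.1,
        Real.mul_rpow hx.le h1u,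
        show x ^ (α - 1) * u ^ (α - 1) * (x ^ (-α) * (1 - u) ^ (-α))
          = (x ^ (α - 1) * x ^ (-α)) * (u ^ (α - 1) * (1 - u) ^ (-α)) by ring,
        ← Real.rpow_add hx, show α - 1 + -α = -1 by ring, Real.rpow_neg_one]
  rw [heq] at hcomp
  have hbeta : (∫ u in (0:ℝ)..1, u ^ (α - 1) * (1 - u) ^ (-α))
      = Real.Gamma α * Real.Gamma (1 - α) := by
    have hb := real_beta h0 (by linarith : 0 < 1 - α)
    rw [show (1:ℝ) - α - 1 = -α by ring, show α + (1 - α) = 1 by ring, Real.Gamma_one,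
        div_one] at hb
    exact hb
  rw [hbeta] at hcomp
  exact (mul_left_cancel₀ (inv_ne_zero hx.ne') hcomp).symm

lemma beta_integrand_integrable {α x : ℝ} (h0 : 0 < α) (h1 : α < 1) (hx : 0 < x) :
    IntegrableOn (fun s : ℝ => s ^ (α - 1) * (x - s) ^ (-α)) (Set.Ioo 0 x) := by
  have hmeas : Measurable (fun s : ℝ => s ^ (α - 1) * (x - s) ^ (-α)) := by
    fun_prop
  have hhalf : 0 < x / 2 := by linarith
  have hL : IntegrableOn (fun s : ℝ => s ^ (α - 1) * (x - s) ^ (-α)) (Set.Ioc 0 (x/2)) := by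
    have hint : IntegrableOn (fun s : ℝ => (x/2) ^ (-α) * s ^ (α - 1)) (Set.Ioc 0 (x/2)) := by
      have h' := (intervalIntegral.intervalIntegrable_rpow' (a := (0:ℝ)) (b := x/2)
        (by linarith : (-1:ℝ) < α - 1)).1
      exact h'.const_mul _
    refine Integrable.mono' hint hmeas.aestronglyMeasurable.restrict
      (MeasureTheory.ae_restrict_of_forall_mem measurableSet_Ioc fun s hs => ?_)
    have hs0 : 0 < s := hs.1
    have hxs : x/2 ≤ x - s := by linarith [hs.2]
    rw [Real.norm_eq_abs, abs_of_nonneg (mul_nonneg (Real.rpow_nonneg hs0.le _)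
      (Real.rpow_nonneg (by linarith) _))]
    rw [mul_comm ((x/2) ^ (-α))]
    exact mul_le_mul_of_nonneg_left
      (Real.rpow_le_rpow_of_nonpos hhalf hxs (by linarith)) (by positivity)
  have hR : IntegrableOn (fun s : ℝ => s ^ (α - 1) * (x - s) ^ (-α)) (Set.Ioo (x/2) x) := by
    have hint : IntegrableOn (fun s : ℝ => (x/2) ^ (α - 1) * (x - s) ^ (-α))
        (Set.Ioo (x/2) x) := by
      have h'' : IntervalIntegrable (fun u : ℝ => (x - u) ^ (-α)) volume (x/2) x := by
        have h' := (intervalIntegral.intervalIntegrable_rpow' (a := (0:ℝ)) (b := x/2)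
          (by linarith : (-1:ℝ) < -α)).comp_sub_left x
        simpa [show x - x / 2 = x / 2 from by ring] using h'.symm
      exact ((h''.1).mono_set Set.Ioo_subset_Ioc_self).const_mul _
    refine Integrable.mono' hint hmeas.aestronglyMeasurable.restrict
      (MeasureTheory.ae_restrict_of_forall_mem measurableSet_Ioo fun s hs => ?_)
    have hs0 : x/2 < s := hs.1
    rw [Real.norm_eq_abs, abs_of_nonneg (mul_nonneg (Real.rpow_nonneg (by linarith) _)
      (Real.rpow_nonneg (by linarith [hs.2]) _))]
    exact mul_le_mul_of_nonneg_right
      (Real.rpow_le_rpow_of_nonpos hhalf hs0.le (by linarith))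
      (Real.rpow_nonneg (by linarith [hs.2]) _)
  refine ((hL.union hR).mono_set ?_ : _)
  intro s hs
  rcases le_total s (x/2) with h | h
  · exact Set.mem_union_left _ ⟨hs.1, h⟩
  · rcases eq_or_lt_of_le h with rfl | h'
    · exact Set.mem_union_left _ ⟨hs.1, le_rfl⟩
    · exact Set.mem_union_right _ ⟨h', hs.2⟩

lemma interval_cheb {α x a b : ℝ} (h0 : 0 < α) (h1 : α < 1)
    (ha : 0 ≤ a) (hab : a < b) (hbx : b ≤ x) :
    α * (1 - α) * ((b - a) * ∫ s in a..b, s ^ (α - 1) * (x - s) ^ (-α))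
      ≤ ((x - a) ^ (1 - α) - (x - b) ^ (1 - α)) * (b ^ α - a ^ α) := by
  have hx : 0 < x := lt_of_le_of_lt ha (lt_of_lt_of_le hab hbx)
  have hsub : Set.Ioo a b ⊆ Set.Ioo 0 x := Set.Ioo_subset_Ioo ha hbx
  set f : ℝ → ℝ := fun s => α * s ^ (α - 1) with hfdef
  set g : ℝ → ℝ := fun s => (1 - α) * (x - s) ^ (-α) with hgdef
  have hIf : IntegrableOn f (Set.Ioo a b) := by
    have h' := (intervalIntegral.intervalIntegrable_rpow' (a := a) (b := b)
      (by linarith : (-1:ℝ) < α - 1)).1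
    exact (h'.mono_set Set.Ioo_subset_Ioc_self).const_mul _
  have hIg' : IntervalIntegrable (fun u : ℝ => (x - u) ^ (-α)) volume a b := by
    have h' := (intervalIntegral.intervalIntegrable_rpow' (a := x - b) (b := x - a)
      (by linarith : (-1:ℝ) < -α)).comp_sub_left x
    simpa [show x - (x - a) = a from by ring, show x - (x - b) = b from by ring] using h'.symm
  have hIg : IntegrableOn g (Set.Ioo a b) :=
    ((hIg'.1).mono_set Set.Ioo_subset_Ioc_self).const_mul _
  have e : (fun s => f s * g s)
      = fun s : ℝ => (α * (1 - α)) * (s ^ (α - 1) * (x - s) ^ (-α)) := by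
    funext s; simp only [hfdef, hgdef]; ring
  have hIfg : IntegrableOn (fun s => f s * g s) (Set.Ioo a b) := by
    rw [e]
    exact ((beta_integrand_integrable h0 h1 hx).mono_set hsub).const_mul _
  have hm : ∀ s ∈ Set.Ioo a b, ∀ u ∈ Set.Ioo a b, s ≤ u → f u ≤ f s ∧ g s ≤ g u := by
    intro s hs u hu hsu
    have hs0 : 0 < s := lt_of_le_of_lt ha hs.1
    have hu0 : 0 < x - u := by linarith [hu.2]
    constructor
    · exact mul_le_mul_of_nonneg_left
        (Real.rpow_le_rpow_of_nonpos hs0 hsu (by linarith)) h0.le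
    · exact mul_le_mul_of_nonneg_left
        (Real.rpow_le_rpow_of_nonpos hu0 (by linarith) (by linarith)) (by linarith)
  have main := cheb_integral hab hIf hIg hIfg hm
  have conv : ∀ h : ℝ → ℝ, (∫ s in Set.Ioo a b, h s) = ∫ s in a..b, h s := by
    intro h
    rw [intervalIntegral.integral_of_le hab.le, MeasureTheory.integral_Ioc_eq_integral_Ioo]
  have vf : (∫ s in a..b, f s) = b ^ α - a ^ α := by
    rw [hfdef, intervalIntegral.integral_const_mul,
      integral_rpow (Or.inl (by linarith : (-1:ℝ) < α - 1)),
      show α - 1 + 1 = α from by ring, mul_comm, div_mul_cancel₀ _ h0.ne']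
  have vg : (∫ s in a..b, g s) = (x - a) ^ (1 - α) - (x - b) ^ (1 - α) := by
    rw [hgdef, intervalIntegral.integral_const_mul,
      intervalIntegral.integral_comp_sub_left (fun u : ℝ => u ^ (-α)) x,
      integral_rpow (Or.inl (by linarith : (-1:ℝ) < -α)),
      show -α + 1 = 1 - α from by ring, mul_comm,
      div_mul_cancel₀ _ (by linarith : (1:ℝ) - α ≠ 0)]
  have vfg : (∫ s in Set.Ioo a b, f s * g s)
      = α * (1 - α) * ∫ s in a..b, s ^ (α - 1) * (x - s) ^ (-α) := by
    rw [e, conv, intervalIntegral.integral_const_mul]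
  rw [vfg, conv f, vf, conv g, vg] at main
  calc α * (1 - α) * ((b - a) * ∫ s in a..b, s ^ (α - 1) * (x - s) ^ (-α))
      = (b - a) * (α * (1 - α) * ∫ s in a..b, s ^ (α - 1) * (x - s) ^ (-α)) := by ring
    _ ≤ (b ^ α - a ^ α) * ((x - a) ^ (1 - α) - (x - b) ^ (1 - α)) := main
    _ = ((x - a) ^ (1 - α) - (x - b) ^ (1 - α)) * (b ^ α - a ^ α) := by ring


lemma Kd_eq (α : ℝ) (t : ℕ → ℝ) (n j : ℕ) :
    Kd α t n j = ((t n - t (j - 1)) ^ (1 - α) - (t n - t j) ^ (1 - α))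
      / (Real.Gamma (2 - α) * (t j - t (j - 1))) := by
  unfold Kd kk
  rw [show (2:ℝ) - α - 1 = 1 - α from by ring, div_sub_div_same, div_div]

lemma Pd_diag (α : ℝ) (t : ℕ → ℝ) (n : ℕ) : Pd α t n n = 1 / Kd α t n n := by
  unfold Pd
  rw [Nat.sub_self, Paux]

lemma Pd_rec (α : ℝ) (t : ℕ → ℝ) {i n : ℕ} (hin : i < n) :
    Pd α t n i = (1 / Kd α t i i) *
      ∑ j ∈ Finset.Icc (i + 1) n, Pd α t n j * (Kd α t j (i + 1) - Kd α t j i) := by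
  unfold Pd
  rw [show n - i = (n - i - 1) + 1 from by omega, Paux,
    show n - (n - i - 1 + 1) = i from by omega, show n - (n - i - 1) = i + 1 from by omega]
  congr 1
  rw [Finset.sum_attach (Finset.range (n - i - 1 + 1))
    (fun r => Paux α t n r * (Kd α t (n - r) (i + 1) - Kd α t (n - r) i))]
  refine Finset.sum_nbij' (fun r => n - r) (fun j => n - j) ?_ ?_ ?_ ?_ ?_
  · intro r hr; simp only [Finset.mem_range] at hr; simp only [Finset.mem_Icc]; omega
  · intro j hj; simp only [Finset.mem_Icc] at hj; simp only [Finset.mem_range]; omega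
  · intro r hr; simp only [Finset.mem_range] at hr; show n - (n - r) = r; omega
  · intro j hj; simp only [Finset.mem_Icc] at hj; show n - (n - j) = j; omega
  · intro r hr; simp only [Finset.mem_range] at hr
    rw [show n - (n - r) = r from by omega]

section mesh

variable {α : ℝ} {t : ℕ → ℝ} {N : ℕ}

lemma tmono (hinc : ∀ i, 1 ≤ i → i ≤ N → t (i - 1) < t i) :
    ∀ a b, a ≤ b → b ≤ N → t a ≤ t b := by
  intro a b hab hbN
  induction b with
  | zero => rw [Nat.le_zero.mp hab]
  | succ k ih =>
    rcases Nat.lt_or_ge a (k + 1) with h | h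
    · refine le_trans (ih (by omega) (by omega)) ?_
      have := hinc (k + 1) (by omega) hbN
      simpa using this.le
    · rw [show a = k + 1 from by omega]

lemma Kd_pos (h0 : 0 < α) (h1 : α < 1) (hinc : ∀ i, 1 ≤ i → i ≤ N → t (i - 1) < t i)
    {i j : ℕ} (hi : 1 ≤ i) (hij : i ≤ j) (hjN : j ≤ N) : 0 < Kd α t j i := by
  rw [Kd_eq]
  have hB : 0 ≤ t j - t i := sub_nonneg.2 (tmono hinc i j hij hjN)
  have hAB : t j - t i < t j - t (i - 1) := by
    have := hinc i hi (le_trans hij hjN); linarith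
  refine div_pos (sub_pos.2 ?_) (mul_pos (Real.Gamma_pos_of_pos (by linarith)) ?_)
  · exact Real.rpow_lt_rpow hB hAB (by linarith)
  · have := hinc i hi (le_trans hij hjN); linarith

lemma Kd_mono (h0 : 0 < α) (h1 : α < 1) (hinc : ∀ i, 1 ≤ i → i ≤ N → t (i - 1) < t i)
    {i j : ℕ} (hi : 1 ≤ i) (hij : i + 1 ≤ j) (hjN : j ≤ N) :
    Kd α t j i ≤ Kd α t j (i + 1) := by
  rw [Kd_eq, Kd_eq, Nat.add_sub_cancel]
  have hΓ : 0 < Real.Gamma (2 - α) := Real.Gamma_pos_of_pos (by linarith)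
  have hX : (0:ℝ) ≤ t j - t (i + 1) := sub_nonneg.2 (tmono hinc (i + 1) j hij hjN)
  have hXY : t j - t (i + 1) < t j - t i := by
    have := hinc (i + 1) (by omega) (le_trans hij hjN); simp only [Nat.add_sub_cancel] at this
    linarith
  have hYZ : t j - t i < t j - t (i - 1) := by
    have := hinc i hi (by omega); linarith
  have slope := (Real.concaveOn_rpow (p := 1 - α) (by linarith) (by linarith)).slope_anti_adjacent
    (Set.mem_Ici.2 hX) (Set.mem_Ici.2 (by linarith : (0:ℝ) ≤ t j - t (i - 1))) hXY hYZ
  rw [div_le_div_iff₀ (by linarith) (by linarith)] at slope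
  rw [div_le_div_iff₀ (mul_pos hΓ (by linarith : (0:ℝ) < t i - t (i - 1)))
    (mul_pos hΓ (by linarith : (0:ℝ) < t (i + 1) - t i))]
  nlinarith [slope, hΓ.le]

lemma Pd_nonneg (h0 : 0 < α) (h1 : α < 1) (hinc : ∀ i, 1 ≤ i → i ≤ N → t (i - 1) < t i) :
    ∀ k i n, 1 ≤ i → i ≤ n → n ≤ N → n - i ≤ k → 0 ≤ Pd α t n i := by
  intro k
  induction k with
  | zero =>
    intro i n h1' h2 h3 h4
    rw [show i = n from by omega, Pd_diag]
    exact (one_div_nonneg.2 (Kd_pos h0 h1 hinc (by omega) le_rfl h3).le)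
  | succ k ih =>
    intro i n h1' h2 h3 h4
    rcases eq_or_lt_of_le h2 with rfl | hin
    · rw [Pd_diag]
      exact (one_div_nonneg.2 (Kd_pos h0 h1 hinc h1' le_rfl h3).le)
    · rw [Pd_rec α t hin]
      refine mul_nonneg (one_div_nonneg.2 (Kd_pos h0 h1 hinc h1' le_rfl (by omega)).le) ?_
      refine Finset.sum_nonneg fun j hj => ?_
      rw [Finset.mem_Icc] at hj
      exact mul_nonneg (ih j n (by omega) hj.2 h3 (by omega))
        (sub_nonneg.2 (Kd_mono h0 h1 hinc h1' hj.1 (by omega)))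

lemma Pd_sum_K (h0 : 0 < α) (h1 : α < 1) (hinc : ∀ i, 1 ≤ i → i ≤ N → t (i - 1) < t i) :
    ∀ k i n, 1 ≤ i → i ≤ n → n ≤ N → n - i ≤ k →
      ∑ j ∈ Finset.Icc i n, Pd α t n j * Kd α t j i = 1 := by
  intro k
  induction k with
  | zero =>
    intro i n h1' h2 h3 h4
    rw [show i = n from by omega, Finset.Icc_self, Finset.sum_singleton, Pd_diag,
      one_div, inv_mul_cancel₀ (Kd_pos h0 h1 hinc (by omega) le_rfl h3).ne']
  | succ k ih =>
    intro i n h1' h2 h3 h4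
    rcases eq_or_lt_of_le h2 with rfl | hin
    · rw [Finset.Icc_self, Finset.sum_singleton, Pd_diag,
        one_div, inv_mul_cancel₀ (Kd_pos h0 h1 hinc h1' le_rfl h3).ne']
    · have hsplit : Finset.Icc i n = insert i (Finset.Icc (i + 1) n) := by
        ext m; simp only [Finset.mem_Icc, Finset.mem_insert]; omega
      rw [hsplit, Finset.sum_insert (by simp only [Finset.mem_Icc]; omega)]
      have hdiag : Pd α t n i * Kd α t i i
          = ∑ j ∈ Finset.Icc (i + 1) n, Pd α t n j * (Kd α t j (i + 1) - Kd α t j i) := by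
        rw [Pd_rec α t hin, one_div, mul_comm ((Kd α t i i)⁻¹), mul_assoc,
          inv_mul_cancel₀ (Kd_pos h0 h1 hinc h1' le_rfl (by omega)).ne', mul_one]
      rw [hdiag, ← Finset.sum_add_distrib]
      have : ∀ j ∈ Finset.Icc (i + 1) n,
          Pd α t n j * (Kd α t j (i + 1) - Kd α t j i) + Pd α t n j * Kd α t j i
            = Pd α t n j * Kd α t j (i + 1) := fun j hj => by ring
      rw [Finset.sum_congr rfl this]
      exact ih (i + 1) n (by omega) hin h3 (by omega)

end mesh

lemma cheb_term {α x a b : ℝ} (h0 : 0 < α) (h1 : α < 1)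
    (ha : 0 ≤ a) (hab : a < b) (hbx : b ≤ x) :
    α * (1 - α) / (Real.Gamma (2 - α) * Real.Gamma (α + 1))
        * ∫ s in a..b, s ^ (α - 1) * (x - s) ^ (-α)
      ≤ (((x - a) ^ (1 - α) - (x - b) ^ (1 - α)) / (Real.Gamma (2 - α) * (b - a)))
        * ((b ^ α - a ^ α) / Real.Gamma (α + 1)) := by
  have hΓ2 : 0 < Real.Gamma (2 - α) := Real.Gamma_pos_of_pos (by linarith)
  have hΓα1 : 0 < Real.Gamma (α + 1) := Real.Gamma_pos_of_pos (by linarith)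
  have hIC := interval_cheb h0 h1 ha hab hbx
  rw [div_mul_div_comm, le_div_iff₀ (mul_pos (mul_pos hΓ2 (sub_pos.2 hab)) hΓα1)]
  have hcc : α * (1 - α) / (Real.Gamma (2 - α) * Real.Gamma (α + 1))
      * (Real.Gamma (2 - α) * Real.Gamma (α + 1)) = α * (1 - α) := by
    field_simp
  calc α * (1 - α) / (Real.Gamma (2 - α) * Real.Gamma (α + 1))
        * (∫ s in a..b, s ^ (α - 1) * (x - s) ^ (-α))
        * (Real.Gamma (2 - α) * (b - a) * Real.Gamma (α + 1))
      = (α * (1 - α) / (Real.Gamma (2 - α) * Real.Gamma (α + 1))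
          * (Real.Gamma (2 - α) * Real.Gamma (α + 1)))
        * ((b - a) * ∫ s in a..b, s ^ (α - 1) * (x - s) ^ (-α)) := by ring
    _ = α * (1 - α) * ((b - a) * ∫ s in a..b, s ^ (α - 1) * (x - s) ^ (-α)) := by rw [hcc]
    _ ≤ ((x - a) ^ (1 - α) - (x - b) ^ (1 - α)) * (b ^ α - a ^ α) := hIC

section mesh2

variable {α : ℝ} {t : ℕ → ℝ} {N : ℕ}

lemma Kw_ge_one (h0 : 0 < α) (h1 : α < 1) (ht0 : t 0 = 0)
    (hinc : ∀ i, 1 ≤ i → i ≤ N → t (i - 1) < t i) {j : ℕ} (hj2 : 2 ≤ j) (hjN : j ≤ N) :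
    1 ≤ ∑ i ∈ Finset.Icc 2 j, Kd α t j i *
      (((t i - t 1) ^ α - (t (i - 1) - t 1) ^ α) / Real.Gamma (α + 1)) := by
  have hΓα : 0 < Real.Gamma α := Real.Gamma_pos_of_pos h0
  have hΓ1α : 0 < Real.Gamma (1 - α) := Real.Gamma_pos_of_pos (by linarith)
  have hΓ2 : 0 < Real.Gamma (2 - α) := Real.Gamma_pos_of_pos (by linarith)
  have hΓα1 : 0 < Real.Gamma (α + 1) := Real.Gamma_pos_of_pos (by linarith)
  have hG2 : Real.Gamma (2 - α) = (1 - α) * Real.Gamma (1 - α) := by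
    rw [show (2:ℝ) - α = (1 - α) + 1 from by ring, Real.Gamma_add_one (by linarith)]
  have hGa1 : Real.Gamma (α + 1) = α * Real.Gamma α := Real.Gamma_add_one h0.ne'
  set x := t j - t 1 with hxdef
  have hx : 0 < x := by
    have h21 : t 1 < t 2 := by simpa using hinc 2 (by omega) (by omega)
    have := tmono hinc 2 j hj2 hjN
    simp only [hxdef]; linarith
  set F : ℕ → ℝ := fun k => t (k + 1) - t 1 with hFdef
  have hIadj : ∀ k < j - 1,
      IntervalIntegrable (fun s => s ^ (α - 1) * (x - s) ^ (-α)) volume (F k) (F (k + 1)) := by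
    intro k hk
    have h0k : 0 ≤ F k := sub_nonneg.2 (tmono hinc 1 (k + 1) (by omega) (by omega))
    have hkk : F k ≤ F (k + 1) :=
      sub_le_sub_right (tmono hinc (k + 1) (k + 2) (by omega) (by omega)) _
    have hkx : F (k + 1) ≤ x := sub_le_sub_right (tmono hinc (k + 2) j (by omega) hjN) _
    rw [intervalIntegrable_iff_integrableOn_Ioo_of_le hkk]
    exact (beta_integrand_integrable h0 h1 hx).mono_set (Set.Ioo_subset_Ioo h0k hkx)
  have hsum := intervalIntegral.sum_integral_adjacent_intervals hIadj
  have hval : (∑ k ∈ Finset.range (j - 1),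
      ∫ s in F k..F (k + 1), s ^ (α - 1) * (x - s) ^ (-α))
      = Real.Gamma α * Real.Gamma (1 - α) := by
    rw [hsum, show F 0 = 0 from by simp [hFdef], show F (j - 1) = x from by
      simp only [hFdef, hxdef]; rw [show j - 1 + 1 = j from by omega]]
    exact beta_shift h0 h1 hx
  set c : ℝ := α * (1 - α) / (Real.Gamma (2 - α) * Real.Gamma (α + 1)) with hcdef
  have hone : c * (Real.Gamma α * Real.Gamma (1 - α)) = 1 := by
    rw [hcdef, hG2, hGa1, div_mul_eq_mul_div, div_eq_one_iff_eq
      (mul_pos (mul_pos (by linarith : (0:ℝ) < 1 - α) hΓ1α) (mul_pos h0 hΓα)).ne']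
    ring
  calc (1:ℝ) = c * (Real.Gamma α * Real.Gamma (1 - α)) := hone.symm
    _ = c * ∑ k ∈ Finset.range (j - 1),
          ∫ s in F k..F (k + 1), s ^ (α - 1) * (x - s) ^ (-α) := by rw [hval]
    _ = ∑ k ∈ Finset.range (j - 1),
          c * ∫ s in F k..F (k + 1), s ^ (α - 1) * (x - s) ^ (-α) := Finset.mul_sum _ _ _
    _ = ∑ i ∈ Finset.Icc 2 j,
          c * ∫ s in F (i - 2)..F (i - 1), s ^ (α - 1) * (x - s) ^ (-α) := by
        refine Finset.sum_nbij' (fun k => k + 2) (fun i => i - 2) ?_ ?_ ?_ ?_ ?_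
        · intro k hk; simp only [Finset.mem_range] at hk; simp only [Finset.mem_Icc]; omega
        · intro i hi; simp only [Finset.mem_Icc] at hi; simp only [Finset.mem_range]; omega
        · intro k hk; simp only [Finset.mem_range] at hk; show k + 2 - 2 = k; omega
        · intro i hi; simp only [Finset.mem_Icc] at hi; show i - 2 + 2 = i; omega
        · intro k hk; simp only [Finset.mem_range] at hk
          rw [show k + 2 - 2 = k from by omega, show k + 2 - 1 = k + 1 from by omega]
    _ ≤ ∑ i ∈ Finset.Icc 2 j, Kd α t j i *
          (((t i - t 1) ^ α - (t (i - 1) - t 1) ^ α) / Real.Gamma (α + 1)) := by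
        refine Finset.sum_le_sum fun i hi => ?_
        rw [Finset.mem_Icc] at hi
        have e1 : F (i - 2) = t (i - 1) - t 1 := by
          simp only [hFdef]; rw [show i - 2 + 1 = i - 1 from by omega]
        have e2 : F (i - 1) = t i - t 1 := by
          simp only [hFdef]; rw [show i - 1 + 1 = i from by omega]
        rw [e1, e2, Kd_eq,
          show t j - t (i - 1) = x - (t (i - 1) - t 1) from by simp only [hxdef]; ring,
          show t j - t i = x - (t i - t 1) from by simp only [hxdef]; ring,
          show t i - t (i - 1) = (t i - t 1) - (t (i - 1) - t 1) from by ring]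
        refine cheb_term h0 h1 ?_ ?_ ?_
        · exact sub_nonneg.2 (tmono hinc 1 (i - 1) (by omega) (by omega))
        · have := hinc i (by omega) (by omega); linarith
        · exact sub_le_sub_right (tmono hinc i j hi.2 hjN) _

end mesh2

/-- weighted-sum bound for the complementary kernels:
`∑_{i=1}^n P^{n,i} a_i ≤ T^α Γ(2-α) (a_1 + (1/(1-α)) max_{2≤i≤n} ((t_i-t_1)/Δt_i)^α a_i)`. -/
theorem stmt19 (α : ℝ) (hα0 : 0 < α) (hα1 : α < 1) (N : ℕ) (hN : 1 ≤ N)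
    (T : ℝ) (hT : 0 < T)
    (t : ℕ → ℝ) (ht0 : t 0 = 0)
    (hmono : ∀ i, 1 ≤ i → i ≤ N → t (i - 1) < t i) (htN : t N ≤ T) :
    ∀ n, ∀ hn2 : 2 ≤ n, n ≤ N →
      ∀ a : ℕ → ℝ, (∀ i, 1 ≤ i → i ≤ n → 0 ≤ a i) →
        ∑ i ∈ Finset.Icc 1 n, Pd α t n i * a i
          ≤ T ^ α * Real.Gamma (2 - α) *
            (a 1 + (1 / (1 - α)) *
              (Finset.Icc 2 n).sup' (Finset.nonempty_Icc.mpr hn2)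
                (fun i => ((t i - t 1) / (t i - t (i - 1))) ^ α * a i)) := by
  intro n hn2 hnN a ha
  have hΓα : 0 < Real.Gamma α := Real.Gamma_pos_of_pos hα0
  have hΓ1α : 0 < Real.Gamma (1 - α) := Real.Gamma_pos_of_pos (by linarith)
  have hΓ2 : 0 < Real.Gamma (2 - α) := Real.Gamma_pos_of_pos (by linarith)
  have hΓα1 : 0 < Real.Gamma (α + 1) := Real.Gamma_pos_of_pos (by linarith)
  have hG2 : Real.Gamma (2 - α) = (1 - α) * Real.Gamma (1 - α) := by
    rw [show (2:ℝ) - α = (1 - α) + 1 from by ring, Real.Gamma_add_one (by linarith)]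
  have hGa1 : Real.Gamma (α + 1) = α * Real.Gamma α := Real.Gamma_add_one hα0.ne'
  have htpos : 0 < t 1 := by
    have := hmono 1 le_rfl hN
    rw [show (1:ℕ) - 1 = 0 from rfl, ht0] at this; exact this
  have ht1T : t 1 ≤ T := le_trans (tmono hmono 1 N hN le_rfl) htN
  have htnT : t n ≤ T := le_trans (tmono hmono n N hnN le_rfl) htN
  have hPnn : ∀ i, 1 ≤ i → i ≤ n → 0 ≤ Pd α t n i := fun i h1i hin =>
    Pd_nonneg hα0 hα1 hmono (n - i) i n h1i hin hnN le_rfl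
  have hId : ∀ l, 1 ≤ l → l ≤ n →
      (∑ j ∈ Finset.Icc l n, Pd α t n j * Kd α t j l) = 1 := fun l h1l hln =>
    Pd_sum_K hα0 hα1 hmono (n - l) l n h1l hln hnN le_rfl
  set M := (Finset.Icc 2 n).sup' (Finset.nonempty_Icc.mpr hn2)
      (fun i => ((t i - t 1) / (t i - t (i - 1))) ^ α * a i) with hMdef
  have hM0 : 0 ≤ M := by
    have h2mem : (2:ℕ) ∈ Finset.Icc 2 n := by simp only [Finset.mem_Icc]; omega
    refine le_trans ?_ (Finset.le_sup'
      (fun i => ((t i - t 1) / (t i - t (i - 1))) ^ α * a i) h2mem)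
    exact mul_nonneg (Real.rpow_nonneg (div_nonneg
      (sub_nonneg.2 (tmono hmono 1 2 (by omega) (by omega)))
      (sub_nonneg.2 (tmono hmono 1 2 (by omega) (by omega)))) _) (ha 2 (by omega) hn2)
  -- bound on Pd n 1
  have hP1 : Pd α t n 1 ≤ Real.Gamma (2 - α) * T ^ α := by
    have hterm : Pd α t n 1 * Kd α t 1 1 ≤ 1 := by
      rw [← hId 1 le_rfl (by omega)]
      refine Finset.single_le_sum (f := fun j => Pd α t n j * Kd α t j 1) (fun j hj => ?_) (show (1:ℕ) ∈ Finset.Icc 1 n by rw [Finset.mem_Icc]; omega)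
      rw [Finset.mem_Icc] at hj
      exact mul_nonneg (hPnn j hj.1 hj.2)
        (Kd_pos hα0 hα1 hmono le_rfl hj.1 (le_trans hj.2 hnN)).le
    have hK11 : Kd α t 1 1 = (t 1) ^ (-α) / Real.Gamma (2 - α) := by
      rw [Kd_eq, show (1:ℕ) - 1 = 0 from rfl, ht0, sub_zero, sub_self,
        Real.zero_rpow (by linarith : (1:ℝ) - α ≠ 0), sub_zero,
        show (1:ℝ) - α = 1 + -α from by ring, Real.rpow_add htpos, Real.rpow_one,
        mul_comm (Real.Gamma (2 - α)) (t 1), mul_div_mul_left _ _ htpos.ne']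
    have hKpos : 0 < Kd α t 1 1 := Kd_pos hα0 hα1 hmono le_rfl le_rfl hN
    have hle : Pd α t n 1 ≤ 1 / Kd α t 1 1 := (le_div_iff₀ hKpos).2 hterm
    refine le_trans hle ?_
    rw [hK11, one_div_div, Real.rpow_neg htpos.le, div_eq_mul_inv, inv_inv]
    exact mul_le_mul_of_nonneg_left
      (Real.rpow_le_rpow htpos.le ht1T hα0.le) hΓ2.le
  -- telescoping sum
  have htel : ∀ m, 1 ≤ m →
      (∑ l ∈ Finset.Icc 2 m, ((t l - t 1) ^ α - (t (l - 1) - t 1) ^ α))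
        = (t m - t 1) ^ α := by
    intro m hm
    induction m, hm using Nat.le_induction with
    | base =>
      rw [Finset.Icc_eq_empty (by omega), Finset.sum_empty, sub_self,
        Real.zero_rpow hα0.ne']
    | succ m hm ih =>
      rw [Finset.sum_Icc_succ_top (by omega : 2 ≤ m + 1), ih, Nat.add_sub_cancel]
      ring
  -- pointwise bound on a i via the maximum
  have hbound : ∀ i, 2 ≤ i → i ≤ n →
      a i ≤ M * ∑ l ∈ Finset.Icc 2 i, Kd α t i l *
        (((t l - t 1) ^ α - (t (l - 1) - t 1) ^ α) / Real.Gamma (α + 1)) := by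
    intro i h2i hin
    have hΔpos : 0 < t i - t (i - 1) := by
      have := hmono i (by omega) (by omega); linarith
    have ht1i : t 1 ≤ t (i - 1) := tmono hmono 1 (i - 1) (by omega) (by omega)
    have hXpos : 0 < t i - t 1 := by linarith
    have hq1 : ((t i - t (i - 1)) / (t i - t 1)) ^ α ≤ 1 :=
      Real.rpow_le_one (by positivity) ((div_le_one hXpos).2 (by linarith)) hα0.le
    have hsum1 := Kw_ge_one (N := N) hα0 hα1 ht0 hmono h2i (le_trans hin hnN)
    have hr : ((t i - t 1) / (t i - t (i - 1))) ^ α * a i ≤ M :=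
      Finset.le_sup' (fun i => ((t i - t 1) / (t i - t (i - 1))) ^ α * a i)
        (show i ∈ Finset.Icc 2 n by rw [Finset.mem_Icc]; exact ⟨h2i, hin⟩)
    have hkey : a i = ((t i - t (i - 1)) / (t i - t 1)) ^ α *
        (((t i - t 1) / (t i - t (i - 1))) ^ α * a i) := by
      rw [← mul_assoc, ← Real.mul_rpow (by positivity) (by positivity),
        show (t i - t (i - 1)) / (t i - t 1) * ((t i - t 1) / (t i - t (i - 1))) = 1 from by
          rw [div_mul_div_comm, div_eq_one_iff_eq (mul_ne_zero hXpos.ne' hΔpos.ne')]; ring,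
        Real.one_rpow, one_mul]
    calc a i = ((t i - t (i - 1)) / (t i - t 1)) ^ α *
          (((t i - t 1) / (t i - t (i - 1))) ^ α * a i) := hkey
      _ ≤ ((t i - t (i - 1)) / (t i - t 1)) ^ α * M :=
          mul_le_mul_of_nonneg_left hr (Real.rpow_nonneg (by positivity) _)
      _ = M * ((t i - t (i - 1)) / (t i - t 1)) ^ α := mul_comm _ _
      _ ≤ M * ∑ l ∈ Finset.Icc 2 i, Kd α t i l *
            (((t l - t 1) ^ α - (t (l - 1) - t 1) ^ α) / Real.Gamma (α + 1)) :=
          mul_le_mul_of_nonneg_left (le_trans hq1 hsum1) hM0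
  -- the main second-part estimate
  have hsum2 : (∑ i ∈ Finset.Icc 2 n, Pd α t n i * a i)
      ≤ M * ((t n - t 1) ^ α / Real.Gamma (α + 1)) := by
    calc (∑ i ∈ Finset.Icc 2 n, Pd α t n i * a i)
        ≤ ∑ i ∈ Finset.Icc 2 n, Pd α t n i * (M * ∑ l ∈ Finset.Icc 2 i, Kd α t i l *
            (((t l - t 1) ^ α - (t (l - 1) - t 1) ^ α) / Real.Gamma (α + 1))) := by
          refine Finset.sum_le_sum fun i hi => ?_
          rw [Finset.mem_Icc] at hi
          exact mul_le_mul_of_nonneg_left (hbound i hi.1 hi.2) (hPnn i (by omega) hi.2)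
      _ = M * ∑ i ∈ Finset.Icc 2 n, ∑ l ∈ Finset.Icc 2 i, Pd α t n i * (Kd α t i l *
            (((t l - t 1) ^ α - (t (l - 1) - t 1) ^ α) / Real.Gamma (α + 1))) := by
          simp only [Finset.mul_sum]
          exact Finset.sum_congr rfl fun i _ => Finset.sum_congr rfl fun l _ => by ring
      _ = M * ∑ l ∈ Finset.Icc 2 n, ∑ i ∈ Finset.Icc l n, Pd α t n i * (Kd α t i l *
            (((t l - t 1) ^ α - (t (l - 1) - t 1) ^ α) / Real.Gamma (α + 1))) := by
          congr 1
          refine Finset.sum_comm' fun i l => ?_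
          simp only [Finset.mem_Icc]
          omega
      _ = M * ∑ l ∈ Finset.Icc 2 n,
            (((t l - t 1) ^ α - (t (l - 1) - t 1) ^ α) / Real.Gamma (α + 1)) *
            ∑ i ∈ Finset.Icc l n, Pd α t n i * Kd α t i l := by
          congr 1
          simp only [Finset.mul_sum]
          exact Finset.sum_congr rfl fun l _ => Finset.sum_congr rfl fun i _ => by ring
      _ = M * ∑ l ∈ Finset.Icc 2 n,
            (((t l - t 1) ^ α - (t (l - 1) - t 1) ^ α) / Real.Gamma (α + 1)) := by
          congr 1
          refine Finset.sum_congr rfl fun l hl => ?_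
          rw [Finset.mem_Icc] at hl
          rw [hId l (by omega) hl.2, mul_one]
      _ = M * ((t n - t 1) ^ α / Real.Gamma (α + 1)) := by
          rw [← Finset.sum_div, htel n (by omega)]
  -- reflection-formula estimate
  have hrefl : 1 ≤ Real.Gamma (α + 1) * Real.Gamma (1 - α) := by
    rw [hGa1, mul_assoc, Real.Gamma_mul_Gamma_one_sub α]
    have hπα : 0 < π * α := by positivity
    have hsin : 0 < Real.sin (π * α) :=
      Real.sin_pos_of_pos_of_lt_pi hπα (by nlinarith [Real.pi_pos])
    rw [mul_div_assoc', le_div_iff₀ hsin]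
    have := Real.sin_lt hπα
    nlinarith
  have hfin2 : (t n - t 1) ^ α / Real.Gamma (α + 1) ≤ T ^ α * Real.Gamma (1 - α) := by
    have h1' : (t n - t 1) ^ α ≤ T ^ α :=
      Real.rpow_le_rpow (by linarith [tmono hmono 1 n (by omega) hnN]) (by linarith) hα0.le
    have h2' : 1 / Real.Gamma (α + 1) ≤ Real.Gamma (1 - α) := by
      rw [div_le_iff₀ hΓα1]
      exact le_trans hrefl (le_of_eq (mul_comm _ _))
    rw [div_eq_mul_one_div]
    exact mul_le_mul h1' h2' (one_div_nonneg.2 hΓα1.le) (Real.rpow_nonneg hT.le α)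
  -- assemble
  have hsplit : Finset.Icc 1 n = insert 1 (Finset.Icc 2 n) := by
    ext m; simp only [Finset.mem_Icc, Finset.mem_insert]; omega
  rw [hsplit, Finset.sum_insert (by simp only [Finset.mem_Icc]; omega)]
  calc Pd α t n 1 * a 1 + ∑ i ∈ Finset.Icc 2 n, Pd α t n i * a i
      ≤ Real.Gamma (2 - α) * T ^ α * a 1 + M * ((t n - t 1) ^ α / Real.Gamma (α + 1)) :=
        add_le_add (mul_le_mul_of_nonneg_right hP1 (ha 1 le_rfl (by omega))) hsum2
    _ ≤ Real.Gamma (2 - α) * T ^ α * a 1 + M * (T ^ α * Real.Gamma (1 - α)) :=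
        add_le_add le_rfl (mul_le_mul_of_nonneg_left hfin2 hM0)
    _ = T ^ α * Real.Gamma (2 - α) * (a 1 + 1 / (1 - α) * M) := by
        rw [hG2]
        have h1α : (1:ℝ) - α ≠ 0 := by linarith
        field_simp
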